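/- arXiv:nlin/0603039 — 8 statements merged into one kernel-verified Lean document; each statement's English description precedes it below -/
import Mathlib

section
/- Let F : ℝ^n → ℝ^n be quadratic, H a real n×n matrix, and let x, y : ℝ → ℝ^n be differentiable curves satisfying the mutually coupled system x'(t) = F(x(t)) + (H − DF(s(t)))·r(t), y'(t) = F(y(t)) − (H − DF(s(t)))·r(t), where s(t) = (x(t)+y(t))/2 and r(t) = (x(t)−y(t))/2. Then the error dynamics is exactly linear: r'(t) = H·r(t) for all t. -/
/-!
For a quadratic map the central difference is exact:
`F (s + r) - F (s - r) = 2 • DF(s) r`, since the even terms `c`, `L s`, `Q s s`, `Q r r`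
cancel. Subtracting the two equations of the coupled system, `r' = (F x - F y) / 2 + H r - DF(s) r`
with `x = s + r`, `y = s - r`, so the nonlinear terms cancel against the correction exactly.
-/

section Quadratic

variable {𝕜 E F : Type*} [NontriviallyNormedField 𝕜] [CompleteSpace 𝕜]
  [NormedAddCommGroup E] [NormedSpace 𝕜 E] [FiniteDimensional 𝕜 E]
  [NormedAddCommGroup F] [NormedSpace 𝕜 F]

theorem LinearMap.hasFDerivAt_apply_self (Q : E →ₗ[𝕜] E →ₗ[𝕜] F) (v : E) :
    HasFDerivAt (fun u => Q u u) (LinearMap.toContinuousLinearMap (Q v + Q.flip v)) v := by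
  let Qc : E →L[𝕜] E →L[𝕜] F :=
    LinearMap.toContinuousLinearMap (LinearMap.toContinuousLinearMap.toLinearMap ∘ₗ Q)
  refine (Qc.hasFDerivAt_of_bilinear (hasFDerivAt_id v) (hasFDerivAt_id v)).congr_fderiv ?_
  ext w
  simp [Qc]

theorem hasFDerivAt_quadratic (f : E → F) (c : F) (L : E →ₗ[𝕜] F) (Q : E →ₗ[𝕜] E →ₗ[𝕜] F)
    (hf : ∀ v, f v = c + L v + Q v v) (v : E) :
    HasFDerivAt f (LinearMap.toContinuousLinearMap (L + Q v + Q.flip v)) v := by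
  have hfun : f = fun u => c + L u + Q u u := funext hf
  subst hfun
  refine ((L.toContinuousLinearMap.hasFDerivAt).const_add c).add
    (Q.hasFDerivAt_apply_self v) |>.congr_fderiv ?_
  ext w
  simp [add_assoc]

theorem sub_eq_two_smul_fderiv_of_quadratic (f : E → F) (c : F) (L : E →ₗ[𝕜] F)
    (Q : E →ₗ[𝕜] E →ₗ[𝕜] F) (hf : ∀ v, f v = c + L v + Q v v) (s r : E) :
    f (s + r) - f (s - r) = (2 : 𝕜) • fderiv 𝕜 f s r := by
  rw [(hasFDerivAt_quadratic f c L Q hf s).fderiv, hf, hf]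
  simp only [map_add, map_sub, LinearMap.add_apply, LinearMap.sub_apply,
    add_apply, LinearMap.coe_toContinuousLinearMap', LinearMap.flip_apply]
  module

end Quadratic

theorem quadratic_error_dynamics_linear_general {n : ℕ} (F : (Fin n → ℝ) → (Fin n → ℝ))
    (c : Fin n → ℝ) (L : (Fin n → ℝ) →ₗ[ℝ] (Fin n → ℝ))
    (Q : (Fin n → ℝ) →ₗ[ℝ] (Fin n → ℝ) →ₗ[ℝ] (Fin n → ℝ))
    (hF : ∀ v, F v = c + L v + Q v v)
    (H : Matrix (Fin n) (Fin n) ℝ) (x y s r : ℝ → (Fin n → ℝ))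
    (hs : ∀ t, s t = (1 / 2 : ℝ) • (x t + y t))
    (hr : ∀ t, r t = (1 / 2 : ℝ) • (x t - y t))
    (hx : ∀ t, HasDerivAt x (F (x t) + (H.mulVec (r t) - fderiv ℝ F (s t) (r t))) t)
    (hy : ∀ t, HasDerivAt y (F (y t) - (H.mulVec (r t) - fderiv ℝ F (s t) (r t))) t) :
    ∀ t, HasDerivAt r (H.mulVec (r t)) t := by
  intro t
  have hx_eq : x t = s t + r t := by rw [hs, hr]; module
  have hy_eq : y t = s t - r t := by rw [hs, hr]; module
  have hdiff : F (x t) - F (y t) = (2 : ℝ) • fderiv ℝ F (s t) (r t) := by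
    rw [hx_eq, hy_eq]
    exact sub_eq_two_smul_fderiv_of_quadratic F c L Q hF (s t) (r t)
  have hr_deriv := (((hx t).sub (hy t)).const_smul (1 / 2 : ℝ)).congr_of_eventuallyEq
    (Filter.Eventually.of_forall hr)
  refine hr_deriv.congr_deriv ?_
  linear_combination (norm := module) (1 / 2 : ℝ) • hdiff

/-- For quadratic `F`, the error dynamics of the mutually coupled
system is exactly linear: `r'(t) = H·r(t)`. -/
theorem quadratic_error_dynamics_linear {n : ℕ} (F : (Fin n → ℝ) → (Fin n → ℝ))
    (c : Fin n → ℝ) (L : (Fin n → ℝ) →ₗ[ℝ] (Fin n → ℝ))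
    (Q : (Fin n → ℝ) →ₗ[ℝ] (Fin n → ℝ) →ₗ[ℝ] (Fin n → ℝ))
    (hQ : ∀ u v, Q u v = Q v u)
    (hF : ∀ v, F v = c + L v + Q v v)
    (H : Matrix (Fin n) (Fin n) ℝ) (x y s r : ℝ → (Fin n → ℝ))
    (hs : ∀ t, s t = (1 / 2 : ℝ) • (x t + y t))
    (hr : ∀ t, r t = (1 / 2 : ℝ) • (x t - y t))
    (hx : ∀ t, HasDerivAt x (F (x t) + (H.mulVec (r t) - fderiv ℝ F (s t) (r t))) t)
    (hy : ∀ t, HasDerivAt y (F (y t) - (H.mulVec (r t) - fderiv ℝ F (s t) (r t))) t) :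
    ∀ t, HasDerivAt r (H.mulVec (r t)) t :=
  quadratic_error_dynamics_linear_general F c L Q hF H x y s r hs hr hx hy
end

section
/- Let F : ℝ^n → ℝ^n be quadratic, H a real n×n matrix, and let x, y : ℝ → ℝ^n be differentiable curves satisfying the mutually coupled system x'(t) = F(x(t)) + (H − DF(s(t)))·r(t), y'(t) = F(y(t)) − (H − DF(s(t)))·r(t), where s(t) = (x(t)+y(t))/2 and r(t) = (x(t)−y(t))/2. Then for all t ≥ 0, x(t) − y(t) = exp(tH)·(x(0) − y(0)), where exp denotes the matrix exponential. -/
/-!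
For a quadratic map the midpoint rule is exact: `F x - F y = DF((x + y) / 2) (x - y)`.
Subtracting the two coupled equations, the nonlinearity therefore cancels against the coupling
term, and `z = x - y` solves the linear equation `z' = H z`. Then `exp (-t H) z(t)` has derivative
zero, so it is constant.
-/

open NormedSpace

section Quadratic

variable {𝕜 E F : Type*} [RCLike 𝕜] [NormedAddCommGroup E] [NormedSpace 𝕜 E]
  [FiniteDimensional 𝕜 E] [NormedAddCommGroup F] [NormedSpace 𝕜 F]
  {f : E → F} {c : F} {L : E →ₗ[𝕜] F} {Q : E →ₗ[𝕜] E →ₗ[𝕜] F}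

theorem hasFDerivAt_of_eq_const_add_linear_add_bilinear (hf : ∀ v, f v = c + L v + Q v v)
    (v : E) : HasFDerivAt f (L + Q v + Q.flip v).toContinuousLinearMap v := by
  have hQ := Q.toContinuousBilinearMap.hasFDerivAt_of_bilinear
    (hasFDerivAt_id v) (hasFDerivAt_id v)
  have hL := L.toContinuousLinearMap.hasFDerivAt (x := v)
  convert ((hL.const_add c).add hQ).congr_of_eventuallyEq
    (Filter.Eventually.of_forall hf) using 1
  ext w
  simp [add_assoc]

theorem sub_eq_fderiv_midpoint_of_eq_const_add_linear_add_bilinear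
    (hf : ∀ v, f v = c + L v + Q v v) (x y : E) :
    f x - f y = fderiv 𝕜 f ((1 / 2 : 𝕜) • (x + y)) (x - y) := by
  rw [(hasFDerivAt_of_eq_const_add_linear_add_bilinear hf _).fderiv, hf, hf]
  simp only [one_div, smul_add, map_add, map_smul, map_sub, add_apply,
    LinearMap.coe_toContinuousLinearMap', smul_apply, LinearMap.flip_apply]
  module

end Quadratic

namespace Matrix

-- Matrices carry no global norm; every norm gives the same `HasDerivAt`, so pick the operator one.
open scoped Matrix.Norms.Operator

variable {𝕂 m n : Type*} [RCLike 𝕂] [Fintype m] [Fintype n]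

theorem _root_.HasDerivAt.matrix_mulVec {M : 𝕂 → Matrix m n 𝕂} {v : 𝕂 → n → 𝕂}
    {M' : Matrix m n 𝕂} {v' : n → 𝕂} {t : 𝕂} (hM : HasDerivAt M M' t)
    (hv : HasDerivAt v v' t) :
    HasDerivAt (fun t => M t *ᵥ v t) (M t *ᵥ v' + M' *ᵥ v t) t :=
  (mulVecBilin 𝕂 𝕂 : Matrix m n 𝕂 →ₗ[𝕂] (n → 𝕂) →ₗ[𝕂] m → 𝕂).toContinuousBilinearMap
    |>.hasDerivAt_of_bilinear (fun _ => hM) (fun _ => hv)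

theorem eq_exp_smul_mulVec_of_hasDerivAt [DecidableEq m] {A : Matrix m m 𝕂} {z : 𝕂 → m → 𝕂}
    (hz : ∀ t, HasDerivAt z (A *ᵥ z t) t) (t : 𝕂) : z t = exp (t • A) *ᵥ z 0 := by
  have hconst : ∀ t, HasDerivAt (fun t => exp (t • -A) *ᵥ z t) 0 t := fun t => by
    refine ((hasDerivAt_exp_smul_const (-A) t).matrix_mulVec (hz t)).congr_deriv ?_
    rw [mulVec_mulVec, mul_neg, neg_mulVec, add_neg_cancel]
  have h := is_const_of_deriv_eq_zero (fun t => (hconst t).differentiableAt)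
    (fun t => (hconst t).deriv) t 0
  simp only [zero_smul, exp_zero, one_mulVec] at h
  rw [← h, mulVec_mulVec, smul_neg, ← exp_add_of_commute _ _ (Commute.refl (t • A)).neg_right,
    add_neg_cancel, exp_zero, one_mulVec]

end Matrix

theorem quadratic_error_matrix_exponential_general {n : ℕ} (F : (Fin n → ℝ) → (Fin n → ℝ))
    (c : Fin n → ℝ) (L : (Fin n → ℝ) →ₗ[ℝ] (Fin n → ℝ))
    (Q : (Fin n → ℝ) →ₗ[ℝ] (Fin n → ℝ) →ₗ[ℝ] (Fin n → ℝ))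
    (hF : ∀ v, F v = c + L v + Q v v)
    (H : Matrix (Fin n) (Fin n) ℝ) (x y s r : ℝ → (Fin n → ℝ))
    (hs : ∀ t, s t = (1 / 2 : ℝ) • (x t + y t))
    (hr : ∀ t, r t = (1 / 2 : ℝ) • (x t - y t))
    (hx : ∀ t, HasDerivAt x (F (x t) + (H.mulVec (r t) - fderiv ℝ F (s t) (r t))) t)
    (hy : ∀ t, HasDerivAt y (F (y t) - (H.mulVec (r t) - fderiv ℝ F (s t) (r t))) t) :
    ∀ t : ℝ, 0 ≤ t →
      x t - y t = (NormedSpace.exp (t • H)).mulVec (x 0 - y 0) := by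
  have hxy : ∀ t, x t - y t = (2 : ℝ) • r t := fun t => by rw [hr]; module
  have hz : ∀ t, HasDerivAt (fun t => x t - y t) (H.mulVec (x t - y t)) t := fun t => by
    have hmid := sub_eq_fderiv_midpoint_of_eq_const_add_linear_add_bilinear hF (x t) (y t)
    rw [← hs, hxy, map_smul] at hmid
    refine ((hx t).sub (hy t)).congr_deriv ?_
    rw [hxy, Matrix.mulVec_smul]
    linear_combination (norm := module) hmid
  exact fun t _ => Matrix.eq_exp_smul_mulVec_of_hasDerivAt hz t

/-- For quadratic `F`, the difference of the mutually coupled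
solutions evolves by the matrix exponential: `x(t) - y(t) = exp(tH)·(x(0) - y(0))`. -/
theorem quadratic_error_matrix_exponential {n : ℕ} (F : (Fin n → ℝ) → (Fin n → ℝ))
    (c : Fin n → ℝ) (L : (Fin n → ℝ) →ₗ[ℝ] (Fin n → ℝ))
    (Q : (Fin n → ℝ) →ₗ[ℝ] (Fin n → ℝ) →ₗ[ℝ] (Fin n → ℝ))
    (hQ : ∀ u v, Q u v = Q v u)
    (hF : ∀ v, F v = c + L v + Q v v)
    (H : Matrix (Fin n) (Fin n) ℝ) (x y s r : ℝ → (Fin n → ℝ))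
    (hs : ∀ t, s t = (1 / 2 : ℝ) • (x t + y t))
    (hr : ∀ t, r t = (1 / 2 : ℝ) • (x t - y t))
    (hx : ∀ t, HasDerivAt x (F (x t) + (H.mulVec (r t) - fderiv ℝ F (s t) (r t))) t)
    (hy : ∀ t, HasDerivAt y (F (y t) - (H.mulVec (r t) - fderiv ℝ F (s t) (r t))) t) :
    ∀ t : ℝ, 0 ≤ t →
      x t - y t = (NormedSpace.exp (t • H)).mulVec (x 0 - y 0) :=
  quadratic_error_matrix_exponential_general F c L Q hF H x y s r hs hr hx hy
end

section
/- (Theorem 1, quadratic case.) Let F : ℝ^n → ℝ^n be quadratic, H a real n×n Hurwitz matrix, and let x, y : ℝ → ℝ^n be differentiable curves satisfying the mutually coupled system x'(t) = F(x(t)) + (H − DF(s(t)))·r(t), y'(t) = F(y(t)) − (H − DF(s(t)))·r(t), where s(t) = (x(t)+y(t))/2 and r(t) = (x(t)−y(t))/2. Then the two systems synchronize for arbitrary initial conditions: ‖x(t) − y(t)‖ → 0 as t → ∞. -/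
/-!
For quadratic `F` the mean value theorem is exact at the midpoint, `F x - F y = DF(s) (x - y)`.
Subtracting the two coupled equations therefore cancels the nonlinearity exactly, and
`d = x - y` solves the linear equation `d' = H d`, i.e. `d t = exp (t H) d 0`. Over `ℂ` every
vector is a sum of generalized eigenvectors of `H`; for one with eigenvalue `μ`,
`exp (t H) v = e^{tμ} ∑_{j<k} t^j / j! (H - μ)^j v`, which tends to `0` because `Re μ < 0`.
-/

open Filter Topology NormedSpace Polynomial Matrix

section Quadratic

variable {𝕜 E G : Type*} [NontriviallyNormedField 𝕜] [CompleteSpace 𝕜]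
  [NormedAddCommGroup E] [NormedSpace 𝕜 E] [FiniteDimensional 𝕜 E]
  [NormedAddCommGroup G] [NormedSpace 𝕜 G]
  {F : E → G} {c : G} {L : E →ₗ[𝕜] G} {Q : E →ₗ[𝕜] E →ₗ[𝕜] G}

theorem hasFDerivAt_of_eq_quadratic (hF : ∀ v, F v = c + L v + Q v v) (v : E) :
    HasFDerivAt F (LinearMap.toContinuousLinearMap (L + Q v + Q.flip v)) v := by
  let Qc : E →L[𝕜] E →L[𝕜] G :=
    LinearMap.toContinuousLinearMap (LinearMap.toContinuousLinearMap.toLinearMap ∘ₗ Q)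
  have hQ : HasFDerivAt (fun u => Qc u u) ((Qc v).comp (.id 𝕜 E) + Qc.flip v) v :=
    Qc.hasFDerivAt.clm_apply (hasFDerivAt_id v)
  rw [funext hF]
  refine (((hasFDerivAt_const c v).add (LinearMap.toContinuousLinearMap L).hasFDerivAt).add
    hQ).congr_fderiv ?_
  ext w
  simp [Qc, add_assoc]

theorem fderiv_apply_of_eq_quadratic (hF : ∀ v, F v = c + L v + Q v v) (v w : E) :
    fderiv 𝕜 F v w = L w + Q v w + Q w v := by
  simp [(hasFDerivAt_of_eq_quadratic hF v).fderiv]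

theorem sub_eq_fderiv_midpoint_of_eq_quadratic [CharZero 𝕜] (hF : ∀ v, F v = c + L v + Q v v)
    (u v : E) : F u - F v = fderiv 𝕜 F ((1 / 2 : 𝕜) • (u + v)) (u - v) := by
  simp only [fderiv_apply_of_eq_quadratic hF, hF, map_add, map_sub, map_smul, LinearMap.add_apply,
    LinearMap.sub_apply, LinearMap.smul_apply]
  module

end Quadratic

-- Any norm would do: it only serves to make the matrix exponential available.
attribute [local instance] Matrix.linftyOpNormedAddCommGroup Matrix.linftyOpNormedRing
  Matrix.linftyOpNormedAlgebra

theorem Complex.tendsto_exp_mul_mul_pow_atTop_nhds_zero {μ : ℂ} (hμ : μ.re < 0) (j : ℕ) :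
    Tendsto (fun t : ℝ => Complex.exp (t * μ) * (t : ℂ) ^ j) atTop (𝓝 0) := by
  rw [tendsto_zero_iff_norm_tendsto_zero]
  refine (tendsto_rpow_mul_exp_neg_mul_atTop_nhds_zero j (-μ.re) (neg_pos.mpr hμ)).congr' ?_
  filter_upwards [eventually_ge_atTop 0] with t ht
  rw [norm_mul, Complex.norm_exp, norm_pow, Complex.norm_real, Real.norm_of_nonneg ht,
    Real.rpow_natCast, mul_comm]
  simp [neg_neg, mul_comm]

namespace Matrix

variable {ι 𝕂 : Type*} [Fintype ι] [DecidableEq ι] [RCLike 𝕂]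

theorem exp_smul_mulVec_eq_sum_of_pow_mulVec_eq_zero {N : Matrix ι ι 𝕂} {v : ι → 𝕂} {k : ℕ}
    (hk : N ^ k *ᵥ v = 0) (t : ℝ) :
    exp (t • N) *ᵥ v = ∑ j ∈ Finset.range k, (t ^ j / j.factorial) • (N ^ j *ᵥ v) := by
  have hsum := (exp_series_hasSum_exp' (𝕂 := ℝ) (t • N)).map
    (mulVec.addMonoidHomLeft v) (continuous_id.matrix_mulVec continuous_const)
  have hterm : ∀ j : ℕ, mulVec.addMonoidHomLeft v ((j.factorial⁻¹ : ℝ) • (t • N) ^ j) =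
      (t ^ j / j.factorial) • (N ^ j *ᵥ v) := fun j => by
    simp only [mulVec.addMonoidHomLeft, AddMonoidHom.coe_mk, ZeroHom.coe_mk, _root_.smul_pow,
      smul_mulVec, smul_smul, div_eq_inv_mul]
  simp only [Function.comp_def, hterm] at hsum
  refine hsum.unique (hasSum_sum_of_ne_finset_zero fun j hj => ?_)
  obtain ⟨i, rfl⟩ := Nat.exists_eq_add_of_le (not_lt.mp (Finset.mem_range.not.mp hj))
  rw [add_comm k i, pow_add N i k, ← mulVec_mulVec, hk, mulVec_zero, smul_zero]

theorem exp_smul_add_smul_one (N : Matrix ι ι ℂ) (μ : ℂ) (t : ℝ) :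
    exp (t • (N + μ • 1)) = Complex.exp (t * μ) • exp (t • N) := by
  have hscalar : t • (μ • 1 : Matrix ι ι ℂ) = algebraMap ℂ _ (t * μ) := by
    rw [Algebra.algebraMap_eq_smul_one, ← smul_assoc, Complex.real_smul]
  rw [smul_add, hscalar, add_comm, exp_add_of_commute _ _ (Algebra.commute_algebraMap_left _ _),
    Complex.exp_eq_exp_ℂ]
  erw [← algebraMap_exp_comm, ← Algebra.smul_def]

theorem tendsto_exp_smul_mulVec_of_pow_sub_smul_one_mulVec_eq_zero {A : Matrix ι ι ℂ} {μ : ℂ}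
    (hμ : μ.re < 0) {v : ι → ℂ} {k : ℕ} (hk : (A - μ • 1) ^ k *ᵥ v = 0) :
    Tendsto (fun t : ℝ => exp (t • A) *ᵥ v) atTop (𝓝 0) := by
  have hexpand : ∀ t : ℝ, exp (t • A) *ᵥ v = ∑ j ∈ Finset.range k,
      (Complex.exp (t * μ) * (t : ℂ) ^ j) • ((j.factorial : ℂ)⁻¹ • ((A - μ • 1) ^ j *ᵥ v)) := by
    intro t
    rw [← sub_add_cancel A (μ • 1), exp_smul_add_smul_one, smul_mulVec, add_sub_cancel_right,
      exp_smul_mulVec_eq_sum_of_pow_mulVec_eq_zero hk, Finset.smul_sum]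
    refine Finset.sum_congr rfl fun j _ => ?_
    rw [← Complex.coe_smul, smul_smul, smul_smul]
    push_cast
    ring_nf
  simp_rw [hexpand]
  simpa using tendsto_finsetSum (Finset.range k) fun j _ =>
    (Complex.tendsto_exp_mul_mul_pow_atTop_nhds_zero hμ j).smul_const
      ((j.factorial : ℂ)⁻¹ • ((A - μ • 1) ^ j *ᵥ v))

theorem tendsto_exp_smul_mulVec_of_forall_isRoot_charpoly_re_neg {A : Matrix ι ι ℂ}
    (hA : ∀ μ : ℂ, A.charpoly.IsRoot μ → μ.re < 0) (v : ι → ℂ) :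
    Tendsto (fun t : ℝ => exp (t • A) *ᵥ v) atTop (𝓝 0) := by
  have hv : v ∈ ⨆ μ, Module.End.maxGenEigenspace (toLin' A) μ := by
    rw [Module.End.iSup_maxGenEigenspace_eq_top]; trivial
  refine Submodule.iSup_induction _ (motive := fun w => Tendsto (fun t : ℝ => exp (t • A) *ᵥ w)
    atTop (𝓝 0)) hv (fun μ w hw => ?_) (by simp)
    (fun w₁ w₂ h₁ h₂ => by simpa [mulVec_add] using h₁.add h₂)
  obtain rfl | hw0 := eq_or_ne w 0
  · simp
  have hμ : Module.End.HasEigenvalue (toLin' A) μ :=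
    (Module.End.hasUnifEigenvalue_iff_hasUnifEigenvalue_one (by simp)).mp
      ((Submodule.ne_bot_iff _).mpr ⟨w, hw, hw0⟩)
  rw [Module.End.hasEigenvalue_iff_isRoot_charpoly, charpoly_toLin'] at hμ
  obtain ⟨k, hk⟩ := (Module.End.mem_maxGenEigenspace _ _ _).mp hw
  refine tendsto_exp_smul_mulVec_of_pow_sub_smul_one_mulVec_eq_zero (hA μ hμ) (k := k) ?_
  rwa [← toLinAlgEquiv'_apply, map_pow, map_sub, map_smul, map_one]

def IsHurwitz (H : Matrix ι ι ℝ) : Prop :=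
  ∀ z : ℂ, aeval z H.charpoly = 0 → z.re < 0

theorem IsHurwitz.tendsto_exp_smul_mulVec {H : Matrix ι ι ℝ} (hH : H.IsHurwitz) (w : ι → ℝ) :
    Tendsto (fun t : ℝ => exp (t • H) *ᵥ w) atTop (𝓝 0) := by
  have hroots : ∀ μ : ℂ, (H.map Complex.ofRealHom).charpoly.IsRoot μ → μ.re < 0 := fun μ hμ =>
    hH μ (by rw [charpoly_map, IsRoot] at hμ; rwa [aeval_def, eval₂_eq_eval_map])
  have hmap : ∀ t : ℝ, (exp (t • H)).map Complex.ofRealHom = exp (t • H.map Complex.ofRealHom) :=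
    fun t => by
      erw [← Complex.ofRealHom.mapMatrix_apply, map_exp _ (continuous_id.matrix_map
        Complex.continuous_ofReal)]
      congr 1
      ext i j
      simp
  have hc := tendsto_exp_smul_mulVec_of_forall_isRoot_charpoly_re_neg hroots (Complex.ofRealHom ∘ w)
  rw [tendsto_pi_nhds] at hc ⊢
  intro i
  have hre : ∀ t : ℝ, (exp (t • H) *ᵥ w) i =
      ((exp (t • H.map Complex.ofRealHom) *ᵥ (Complex.ofRealHom ∘ w)) i).re := fun t => by
    rw [← hmap, ← RingHom.map_mulVec, Complex.ofRealHom_eq_coe, Complex.ofReal_re]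
  simpa only [hre, Function.comp_def, Pi.zero_apply, Complex.zero_re] using
    (Complex.continuous_re.tendsto 0).comp (hc i)

theorem hasDerivAt_exp_smul_mulVec (H : Matrix ι ι ℝ) (v : ι → ℝ) (t : ℝ) :
    HasDerivAt (fun u : ℝ => exp (u • H) *ᵥ v) (H *ᵥ (exp (t • H) *ᵥ v)) t := by
  let applyV : Matrix ι ι ℝ →L[ℝ] ι → ℝ :=
    LinearMap.toContinuousLinearMap (LinearMap.applyₗ v ∘ₗ toLin'.toLinearMap)
  rw [mulVec_mulVec]
  exact applyV.hasFDerivAt.comp_hasDerivAt t (hasDerivAt_exp_smul_const' H t)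

theorem eq_exp_smul_mulVec_of_hasDerivAt_s5 {H : Matrix ι ι ℝ} {d : ℝ → ι → ℝ}
    (hd : ∀ t, HasDerivAt d (H *ᵥ d t) t) : d = fun t => exp (t • H) *ᵥ d 0 := by
  let HL : (ι → ℝ) →L[ℝ] ι → ℝ := LinearMap.toContinuousLinearMap (toLin' H)
  refine ODE_solution_unique_univ (v := fun _ => (H *ᵥ ·)) (s := fun _ => Set.univ) (t₀ := 0)
    (fun _ => HL.lipschitz.lipschitzOnWith) (fun t => ⟨hd t, trivial⟩)
    (fun t => ⟨hasDerivAt_exp_smul_mulVec H (d 0) t, trivial⟩) (by simp)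

theorem IsHurwitz.tendsto_of_hasDerivAt {H : Matrix ι ι ℝ} (hH : H.IsHurwitz) {d : ℝ → ι → ℝ}
    (hd : ∀ t, HasDerivAt d (H *ᵥ d t) t) : Tendsto d atTop (𝓝 0) := by
  rw [eq_exp_smul_mulVec_of_hasDerivAt_s5 hd]
  exact hH.tendsto_exp_smul_mulVec (d 0)

end Matrix

theorem quadratic_mutual_synchronization_general {n : ℕ} (F : (Fin n → ℝ) → (Fin n → ℝ))
    (c : Fin n → ℝ) (L : (Fin n → ℝ) →ₗ[ℝ] (Fin n → ℝ))
    (Q : (Fin n → ℝ) →ₗ[ℝ] (Fin n → ℝ) →ₗ[ℝ] (Fin n → ℝ))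
    (hF : ∀ v, F v = c + L v + Q v v)
    (H : Matrix (Fin n) (Fin n) ℝ)
    (hH : ∀ z : ℂ, (Polynomial.aeval z) H.charpoly = 0 → z.re < 0)
    (x y s r : ℝ → (Fin n → ℝ))
    (hs : ∀ t, s t = (1 / 2 : ℝ) • (x t + y t))
    (hr : ∀ t, r t = (1 / 2 : ℝ) • (x t - y t))
    (hx : ∀ t, HasDerivAt x (F (x t) + (H.mulVec (r t) - fderiv ℝ F (s t) (r t))) t)
    (hy : ∀ t, HasDerivAt y (F (y t) - (H.mulVec (r t) - fderiv ℝ F (s t) (r t))) t) :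
    Filter.Tendsto (fun t => ‖x t - y t‖) Filter.atTop (nhds 0) := by
  have hdiff : ∀ t, HasDerivAt (fun u => x u - y u) (H *ᵥ (x t - y t)) t := fun t => by
    have hxy : x t - y t = (2 : ℝ) • r t := by rw [hr t]; module
    have hF_sub := sub_eq_fderiv_midpoint_of_eq_quadratic hF (x t) (y t)
    rw [← hs t, hxy, map_smul] at hF_sub
    refine ((hx t).sub (hy t)).congr_deriv ?_
    rw [hxy, mulVec_smul]
    linear_combination (norm := module) hF_sub
  simpa [Function.comp_def] using
    (continuous_norm.tendsto 0).comp (Matrix.IsHurwitz.tendsto_of_hasDerivAt hH hdiff)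

/-- Theorem 1, quadratic case: For quadratic `F` and Hurwitz `H`,
the mutually coupled systems synchronize for arbitrary initial conditions:
`‖x(t) - y(t)‖ → 0` as `t → ∞`. -/
theorem quadratic_mutual_synchronization {n : ℕ} (F : (Fin n → ℝ) → (Fin n → ℝ))
    (c : Fin n → ℝ) (L : (Fin n → ℝ) →ₗ[ℝ] (Fin n → ℝ))
    (Q : (Fin n → ℝ) →ₗ[ℝ] (Fin n → ℝ) →ₗ[ℝ] (Fin n → ℝ))
    (hQ : ∀ u v, Q u v = Q v u)
    (hF : ∀ v, F v = c + L v + Q v v)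
    (H : Matrix (Fin n) (Fin n) ℝ)
    (hH : ∀ z : ℂ, (Polynomial.aeval z) H.charpoly = 0 → z.re < 0)
    (x y s r : ℝ → (Fin n → ℝ))
    (hs : ∀ t, s t = (1 / 2 : ℝ) • (x t + y t))
    (hr : ∀ t, r t = (1 / 2 : ℝ) • (x t - y t))
    (hx : ∀ t, HasDerivAt x (F (x t) + (H.mulVec (r t) - fderiv ℝ F (s t) (r t))) t)
    (hy : ∀ t, HasDerivAt y (F (y t) - (H.mulVec (r t) - fderiv ℝ F (s t) (r t))) t) :
    Filter.Tendsto (fun t => ‖x t - y t‖) Filter.atTop (nhds 0) :=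
  quadratic_mutual_synchronization_general F c L Q hF H hH x y s r hs hr hx hy
end

section
/- (Routh–Hurwitz criterion for cubics.) Let a₁, a₂, a₃ be real numbers. Every complex root z of the polynomial z³ + a₁z² + a₂z + a₃ satisfies Re z < 0 if and only if a₁ > 0, a₁·a₂ − a₃ > 0, and a₃ > 0. -/
lemma cubic_real_root (a₁ a₂ a₃ : ℝ) : ∃ r : ℝ, r^3 + a₁*r^2 + a₂*r + a₃ = 0 := by
  set f : ℝ → ℝ := fun x => x^3 + a₁*x^2 + a₂*x + a₃ with hf
  have hcont : Continuous f := by fun_prop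
  set M : ℝ := 1 + |a₁| + |a₂| + |a₃| with hM
  have h1 : 0 ≤ |a₁| := abs_nonneg _
  have h2 : 0 ≤ |a₂| := abs_nonneg _
  have h3 : 0 ≤ |a₃| := abs_nonneg _
  have b1 : a₁ ≤ |a₁| := le_abs_self _
  have b1' : -|a₁| ≤ a₁ := neg_abs_le _
  have b2 : a₂ ≤ |a₂| := le_abs_self _
  have b2' : -|a₂| ≤ a₂ := neg_abs_le _
  have b3 : a₃ ≤ |a₃| := le_abs_self _
  have b3' : -|a₃| ≤ a₃ := neg_abs_le _
  have hM1 : 1 ≤ M := by simp [hM]; linarith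
  have hfM : 0 ≤ f M := by
    simp only [hf]
    nlinarith [sq_nonneg M, mul_le_mul_of_nonneg_right b1' (sq_nonneg M),
      mul_le_mul_of_nonneg_right b2' (le_trans zero_le_one hM1)]
  have hfM' : f (-M) ≤ 0 := by
    simp only [hf]
    nlinarith [sq_nonneg M, mul_le_mul_of_nonneg_right b1 (sq_nonneg M),
      mul_le_mul_of_nonneg_right b2 (le_trans zero_le_one hM1)]
  have hle : (-M) ≤ M := by linarith
  have := intermediate_value_Icc hle hcont.continuousOn
  have h0 : (0:ℝ) ∈ Set.Icc (f (-M)) (f M) := ⟨hfM', hfM⟩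
  obtain ⟨r, _, hr⟩ := this h0
  exact ⟨r, hr⟩

lemma quad_neg_re (b c : ℝ) (hb : 0 < b) (hc : 0 < c) (z : ℂ)
    (hz : z^2 + (b:ℂ)*z + (c:ℂ) = 0) : z.re < 0 := by
  set x := z.re with hx
  set y := z.im with hy
  have hre : x^2 - y^2 + b*x + c = 0 := by
    have := congrArg Complex.re hz
    simpa [Complex.add_re, Complex.mul_re, pow_two, Complex.mul_im] using this
  have him : y*(2*x + b) = 0 := by
    have := congrArg Complex.im hz
    simp [Complex.add_im, Complex.mul_im, pow_two, Complex.mul_re] at this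
    linarith
  rcases mul_eq_zero.mp him with h | h
  · nlinarith [sq_nonneg x]
  · linarith

lemma quad_sign (b c : ℝ)
    (h : ∀ z : ℂ, z^2 + (b:ℂ)*z + (c:ℂ) = 0 → z.re < 0) : 0 < b ∧ 0 < c := by
  rcases le_or_gt 0 (b^2 - 4*c) with hd | hd
  · set s := Real.sqrt (b^2 - 4*c) with hs
    have hs2 : s^2 = b^2 - 4*c := Real.sq_sqrt hd
    have hx1 : ((-b+s)/2)^2 + b*((-b+s)/2) + c = 0 := by linear_combination hs2/4
    have hx2 : ((-b-s)/2)^2 + b*((-b-s)/2) + c = 0 := by linear_combination hs2/4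
    have h1 : (-b+s)/2 < 0 := by
      have := h (((-b+s)/2 : ℝ) : ℂ) (by exact_mod_cast congrArg (Complex.ofReal) hx1)
      simpa using this
    have h2 : (-b-s)/2 < 0 := by
      have := h (((-b-s)/2 : ℝ) : ℂ) (by exact_mod_cast congrArg (Complex.ofReal) hx2)
      simpa using this
    constructor
    · linarith
    · nlinarith
  · have hb : 0 < b := by
      set t := Real.sqrt (4*c - b^2) with ht
      have ht2 : t^2 = 4*c - b^2 := Real.sq_sqrt (by linarith)
      set z : ℂ := ⟨-b/2, t/2⟩ with hz
      have hzz : z^2 + (b:ℂ)*z + (c:ℂ) = 0 := by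
        rw [Complex.ext_iff]
        constructor
        · simp [hz, pow_two, Complex.mul_re, Complex.mul_im]
          nlinarith
        · simp [hz, pow_two, Complex.mul_re, Complex.mul_im]
          ring
      have := h z hzz
      simp [hz] at this
      linarith
    exact ⟨hb, by nlinarith [sq_nonneg b]⟩

/-- Routh–Hurwitz criterion for cubics: every complex root of
`z³ + a₁z² + a₂z + a₃` has negative real part iff `a₁ > 0`, `a₁a₂ - a₃ > 0`
and `a₃ > 0`. -/
theorem routh_hurwitz_cubic (a₁ a₂ a₃ : ℝ) :
    (∀ z : ℂ, z ^ 3 + (a₁ : ℂ) * z ^ 2 + (a₂ : ℂ) * z + (a₃ : ℂ) = 0 → z.re < 0) ↔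
      a₁ > 0 ∧ a₁ * a₂ - a₃ > 0 ∧ a₃ > 0 := by
  obtain ⟨r, hr⟩ := cubic_real_root a₁ a₂ a₃
  set b : ℝ := a₁ + r with hbdef
  set c : ℝ := a₂ + a₁*r + r^2 with hcdef
  have hrC : (r:ℂ)^3 + (a₁:ℂ)*(r:ℂ)^2 + (a₂:ℂ)*(r:ℂ) + (a₃:ℂ) = 0 := by
    exact_mod_cast congrArg (Complex.ofReal) hr
  have hfact : ∀ z : ℂ, z ^ 3 + (a₁ : ℂ) * z ^ 2 + (a₂ : ℂ) * z + (a₃ : ℂ)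
      = (z - (r:ℂ)) * (z^2 + (b:ℂ)*z + (c:ℂ)) := by
    intro z
    push_cast [hbdef, hcdef]
    linear_combination hrC
  have ha1 : a₁ = b - r := by rw [hbdef]; ring
  have ha2 : a₂ = c - r*b := by rw [hcdef, hbdef]; ring
  have ha3 : a₃ = -(r*c) := by rw [hcdef]; linear_combination hr
  constructor
  · intro H
    have hr0 : r < 0 := by
      have := H (r:ℂ) hrC
      simpa using this
    obtain ⟨hb, hc⟩ := quad_sign b c (fun z hz => H z (by rw [hfact z, hz, mul_zero]))
    refine ⟨by linarith, ?_, by nlinarith⟩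
    have key : a₁*a₂ - a₃ = b*(c + r^2) + (-r)*b^2 := by
      rw [ha1, ha2, ha3]; ring
    nlinarith [mul_pos hb hc, mul_pos (neg_pos.mpr hr0) (mul_pos hb hb), sq_nonneg r]
  · rintro ⟨h1, h2, h3⟩
    have hrc : r*c < 0 := by rw [ha3] at h3; linarith
    have hbig : b*(c + r^2 - r*b) > 0 := by
      have key : a₁*a₂ - a₃ = b*(c + r^2 - r*b) := by rw [ha1, ha2, ha3]; ring
      linarith [key ▸ h2]
    have hbr : r < b := by rw [ha1] at h1; linarith
    have hr0 : r < 0 := by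
      by_contra h
      push_neg at h
      have hrpos : 0 < r := lt_of_le_of_ne h (by rintro rfl; simp at hrc)
      have hcneg : c < 0 := by nlinarith
      nlinarith [mul_pos hrpos (sub_pos.mpr hbr)]
    have hc : 0 < c := by nlinarith
    have hb : 0 < b := by
      by_contra h
      push_neg at h
      nlinarith [mul_lt_mul_of_neg_left hbr hr0]
    intro z hz
    rw [hfact z] at hz
    rcases mul_eq_zero.mp hz with h | h
    · have : z = (r:ℂ) := by linear_combination h
      rw [this]; simpa using hr0
    · exact quad_neg_re b c hb hc z h
end

section
/- (Local synchronization under a quadratic remainder bound.) Let H be a real n×n Hurwitz matrix, C > 0, and let g : ℝ × ℝ^n → ℝ^n be continuous with ‖g(t, v)‖ ≤ C‖v‖² for all t and v. Then there exists δ > 0 such that every differentiable curve r : [0, ∞) → ℝ^n satisfying r'(t) = H·r(t) + g(t, r(t)) for all t ≥ 0 and ‖r(0)‖ ≤ δ satisfies ‖r(t)‖ → 0 as t → ∞. -/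
/-!
Since `H` is Hurwitz, Cayley–Hamilton makes its complexification `A` a root of `∏ (X - μ)` with
`Re μ < 0`. Peeling off one factor at a time, using `exp (t A) = e^{μ t} exp (t (A - μ))` and
the fundamental theorem of calculus for `exp (t (A - μ))`, gives `‖exp (t H)‖ ≤ M e^{-a t}`.

By variation of constants, `r t = exp (t H) r 0 + ∫₀ᵗ exp ((t - s) H) g (s, r s) ds`. As long as
`e^{a s} ‖r s‖ ≤ K` on `[0, t]`, the quadratic bound on `g` yields
`e^{a t} ‖r t‖ ≤ M ‖r 0‖ + M C K² / a`, which is `< K` for `K = 2 M δ` when `δ` is small.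
A continuity argument then keeps `e^{a t} ‖r t‖ < K` for all `t ≥ 0`.
-/

open NormedSpace Polynomial Set
open scoped Real

theorem norm_integral_le_of_norm_le_mul_exp {E : Type*} [NormedAddCommGroup E] [NormedSpace ℝ E]
    {F : ℝ → E} {c κ t : ℝ} (hκ : κ ≠ 0) (ht : 0 ≤ t)
    (hF : ∀ s ∈ Ioc 0 t, ‖F s‖ ≤ c * rexp (κ * s)) :
    ‖∫ s in (0 : ℝ)..t, F s‖ ≤ c * ((rexp (κ * t) - 1) / κ) := by
  have h := intervalIntegral.norm_integral_le_of_norm_le ht (Filter.Eventually.of_forall hF)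
    ((by fun_prop : Continuous fun s => c * rexp (κ * s)).intervalIntegrable
      (μ := MeasureTheory.volume) 0 t)
  simpa [intervalIntegral.integral_comp_mul_left (fun s => rexp s) hκ, div_eq_inv_mul] using h

section BanachAlgebra

variable {𝔸 : Type*} [NormedRing 𝔸] [NormedAlgebra ℂ 𝔸] [CompleteSpace 𝔸]

theorem exp_add_algebraMap (x : 𝔸) (z : ℂ) :
    exp (x + algebraMap ℂ 𝔸 z) = Complex.exp z • exp x := by
  -- `exp_add_of_commute` is stated for normed `ℚ`-algebras.
  let := NormedAlgebra.restrictScalars ℚ ℂ 𝔸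
  rw [exp_add_of_commute (Algebra.commutes z x).symm, ← algebraMap_exp_comm, Complex.exp_eq_exp_ℂ,
    ← Algebra.commutes, Algebra.smul_def]

theorem norm_exp_smul_mul_eq (A Y : 𝔸) (μ : ℂ) (t : ℝ) :
    ‖exp (t • A) * Y‖ = rexp (t * μ.re) * ‖exp (t • (A - algebraMap ℂ 𝔸 μ)) * Y‖ := by
  have : t • A = t • (A - algebraMap ℂ 𝔸 μ) + algebraMap ℂ 𝔸 (t * μ) := by
    rw [map_mul, ← Algebra.smul_def, Complex.coe_smul, smul_sub, sub_add_cancel]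
  rw [this, exp_add_algebraMap, smul_mul_assoc, norm_smul, Complex.norm_exp]
  simp

theorem norm_exp_smul_mul_le_of_sub_mul (A B : 𝔸) (μ : ℂ) {a K : ℝ} (hμ : a < -μ.re)
    (hK : ∀ s ≥ 0, ‖exp (s • A) * ((A - algebraMap ℂ 𝔸 μ) * B)‖ ≤ K * rexp (-(a * s)))
    {t : ℝ} (ht : 0 ≤ t) :
    ‖exp (t • A) * B‖ ≤ (‖B‖ + K / (-μ.re - a)) * rexp (-(a * t)) := by
  set N := A - algebraMap ℂ 𝔸 μ
  set κ := -μ.re - a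
  have hκ : 0 < κ := by linarith
  have hK0 : 0 ≤ K := by simpa using (norm_nonneg _).trans (hK 0 le_rfl)
  have hexp (s : ℝ) : rexp (s * μ.re) * rexp (κ * s) = rexp (-(a * s)) := by
    rw [← Real.exp_add]; congr 1; ring
  have hderiv (s : ℝ) : HasDerivAt (fun s : ℝ => exp (s • N) * B) (exp (s • N) * (N * B)) s := by
    simpa [mul_assoc] using (hasDerivAt_exp_smul_const N s).mul_const B
  have hftc : exp (t • N) * B - B = ∫ s in (0 : ℝ)..t, exp (s • N) * (N * B) := by
    have hcont : Continuous fun s : ℝ => exp (s • N) :=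
      continuous_iff_continuousAt.2 fun s => (hasDerivAt_exp_smul_const N s).continuousAt
    rw [intervalIntegral.integral_eq_sub_of_hasDerivAt (fun s _ => hderiv s)
      ((hcont.mul continuous_const).intervalIntegrable 0 t)]
    simp
  have hN : ‖exp (t • N) * B‖ ≤ ‖B‖ + K / κ * rexp (κ * t) := by
    have hint := norm_integral_le_of_norm_le_mul_exp hκ.ne' ht fun s hs => by
      have h := (norm_exp_smul_mul_eq A (N * B) μ s).symm.trans_le (hK s hs.1.le)
      rw [← hexp s, mul_left_comm] at h
      exact le_of_mul_le_mul_left h (Real.exp_pos _)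
    have hle : K * ((rexp (κ * t) - 1) / κ) ≤ K / κ * rexp (κ * t) := by
      rw [mul_div_assoc', div_mul_eq_mul_div]; gcongr; linarith
    rw [← hftc] at hint
    linarith [norm_le_insert' (exp (t • N) * B) B]
  calc ‖exp (t • A) * B‖ = rexp (t * μ.re) * ‖exp (t • N) * B‖ := norm_exp_smul_mul_eq A B μ t
    _ ≤ rexp (t * μ.re) * (‖B‖ + K / κ * rexp (κ * t)) := by gcongr
    _ = rexp (t * μ.re) * ‖B‖ + K / κ * rexp (-(a * t)) := by rw [← hexp]; ring
    _ ≤ (‖B‖ + K / κ) * rexp (-(a * t)) := by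
      have : rexp (t * μ.re) ≤ rexp (-(a * t)) := by gcongr; nlinarith
      nlinarith [norm_nonneg B, div_nonneg hK0 hκ.le]

theorem exists_norm_exp_smul_mul_le_of_aeval_mul_eq_zero (A : 𝔸) (s : Multiset ℂ)
    (hs : ∀ μ ∈ s, μ.re < 0) (B : 𝔸) (hB : aeval A (s.map fun μ => X - C μ).prod * B = 0) :
    ∃ a > 0, ∃ K, ∀ t ≥ 0, ‖exp (t • A) * B‖ ≤ K * rexp (-(a * t)) := by
  induction s using Multiset.induction_on generalizing B with
  | empty =>
    refine ⟨1, one_pos, 0, fun t _ => ?_⟩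
    simp_all
  | cons μ s ih =>
    have hμ : μ.re < 0 := hs μ (Multiset.mem_cons_self μ s)
    have hsub : aeval A (X - C μ) = A - algebraMap ℂ 𝔸 μ := by simp
    obtain ⟨a, ha, K, hK⟩ := ih (fun ν hν => hs ν (Multiset.mem_cons_of_mem hν))
      ((A - algebraMap ℂ 𝔸 μ) * B) (by
        rwa [Multiset.map_cons, Multiset.prod_cons, mul_comm (X - C μ), map_mul, hsub,
          mul_assoc] at hB)
    have hK0 : 0 ≤ K := by simpa using (norm_nonneg _).trans (hK 0 le_rfl)
    set a' := min a (-μ.re / 2)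
    have hK' : ∀ s ≥ 0, ‖exp (s • A) * ((A - algebraMap ℂ 𝔸 μ) * B)‖ ≤ K * rexp (-(a' * s)) :=
      fun s hs => (hK s hs).trans (by gcongr; exact min_le_left _ _)
    exact ⟨a', lt_min ha (by linarith), _, fun t ht => norm_exp_smul_mul_le_of_sub_mul A B μ
      (by linarith [min_le_right a (-μ.re / 2)]) hK' ht⟩

theorem exists_norm_exp_smul_le_of_aeval_eq_zero (A : 𝔸) {p : ℂ[X]} (hp : p.Monic)
    (hA : aeval A p = 0) (hroots : ∀ μ ∈ p.roots, μ.re < 0) :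
    ∃ a > 0, ∃ K, ∀ t ≥ 0, ‖exp (t • A)‖ ≤ K * rexp (-(a * t)) := by
  rw [← prod_multiset_X_sub_C_of_monic_of_roots_card_eq hp
    IsAlgClosed.card_roots_eq_natDegree] at hA
  simpa using exists_norm_exp_smul_mul_le_of_aeval_mul_eq_zero A _ hroots 1 (by rw [hA, zero_mul])

end BanachAlgebra

namespace Matrix

open scoped Matrix.Norms.Frobenius

variable {m : Type*} [Fintype m] [DecidableEq m]

theorem re_lt_zero_of_mem_roots_charpoly_map (H : Matrix m m ℝ)
    (hH : ∀ z : ℂ, aeval z H.charpoly = 0 → z.re < 0) :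
    ∀ μ ∈ (H.map (algebraMap ℝ ℂ)).charpoly.roots, μ.re < 0 := by
  intro μ hμ
  rw [charpoly_map, mem_roots_map_of_injective (algebraMap ℝ ℂ).injective
    H.charpoly_monic.ne_zero] at hμ
  exact hH μ hμ

theorem exp_toEuclideanCLM (A : Matrix m m ℝ) :
    exp (toEuclideanCLM (n := m) (𝕜 := ℝ) A) = toEuclideanCLM (n := m) (𝕜 := ℝ) (exp A) :=
  (map_exp (toEuclideanCLM (n := m) (𝕜 := ℝ)) (LinearMap.toContinuousLinearMap
    (toEuclideanCLM (n := m) (𝕜 := ℝ)).toAlgEquiv.toLinearMap).continuous A).symm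

theorem exp_map_algebraMap (A : Matrix m m ℝ) :
    exp (A.map (algebraMap ℝ ℂ)) = (exp A).map (algebraMap ℝ ℂ) :=
  (map_exp (algebraMap ℝ ℂ).mapMatrix (continuous_id.matrix_map Complex.continuous_ofReal) A).symm

theorem norm_toEuclideanCLM_le_frobenius_norm {𝕜 : Type*} [RCLike 𝕜] (A : Matrix m m 𝕜) :
    ‖toEuclideanCLM (n := m) (𝕜 := 𝕜) A‖ ≤ ‖A‖ :=
  ContinuousLinearMap.opNorm_le_bound _ (norm_nonneg _) fun x => by
    have h := frobenius_norm_mul A (replicateCol Unit (WithLp.ofLp x))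
    rwa [← replicateCol_mulVec, frobenius_norm_replicateCol, frobenius_norm_replicateCol] at h

theorem exists_norm_exp_smul_toEuclideanCLM_le (H : Matrix m m ℝ)
    (hH : ∀ z : ℂ, aeval z H.charpoly = 0 → z.re < 0) :
    ∃ a > 0, ∃ M ≥ 1, ∀ t ≥ 0,
      ‖exp (t • toEuclideanCLM (n := m) (𝕜 := ℝ) H)‖ ≤ M * rexp (-(a * t)) := by
  obtain ⟨a, ha, K, hK⟩ := exists_norm_exp_smul_le_of_aeval_eq_zero (H.map (algebraMap ℝ ℂ))
    (charpoly_monic _) (aeval_self_charpoly _) (H.re_lt_zero_of_mem_roots_charpoly_map hH)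
  refine ⟨a, ha, max K 1, le_max_right _ _, fun t ht => ?_⟩
  have hsmul : (t • H).map (algebraMap ℝ ℂ) = t • H.map (algebraMap ℝ ℂ) := by
    ext i j; simp
  calc ‖exp (t • toEuclideanCLM (n := m) (𝕜 := ℝ) H)‖
      = ‖toEuclideanCLM (n := m) (𝕜 := ℝ) (exp (t • H))‖ := by
        rw [← map_smul, exp_toEuclideanCLM]
    _ ≤ ‖exp (t • H)‖ := norm_toEuclideanCLM_le_frobenius_norm _
    _ = ‖(exp (t • H)).map (algebraMap ℝ ℂ)‖ :=
        (frobenius_norm_map_eq _ _ fun x => Complex.norm_real x).symm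
    _ = ‖exp (t • H.map (algebraMap ℝ ℂ))‖ := by rw [← hsmul, exp_map_algebraMap]
    _ ≤ K * rexp (-(a * t)) := hK t ht
    _ ≤ max K 1 * rexp (-(a * t)) := by gcongr; exact le_max_left _ _

end Matrix

theorem forall_lt_of_forall_le_imp_lt {f : ℝ → ℝ} {B : ℝ} (hf : ContinuousOn f (Ici 0))
    (h0 : f 0 < B) (hstep : ∀ T ≥ 0, (∀ s ∈ Icc 0 T, f s ≤ B) → f T < B) :
    ∀ t ≥ 0, f t < B := by
  by_contra! hbad
  set S := Ici 0 ∩ f ⁻¹' Ici B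
  have hS : IsClosed S := hf.preimage_isClosed_of_isClosed isClosed_Ici isClosed_Ici
  have hSbdd : BddBelow S := ⟨0, fun s hs => hs.1⟩
  obtain ⟨hT0, hTB⟩ : sInf S ∈ S := hS.csInf_mem hbad hSbdd
  set T := sInf S
  have hbefore : ∀ s ∈ Ico 0 T, f s ≤ B := fun s hs =>
    le_of_lt (not_le.1 fun hB => (csInf_le hSbdd ⟨hs.1, hB⟩).not_gt hs.2)
  have hT_ne : T ≠ 0 := fun h => (h ▸ hTB : B ≤ f 0).not_gt h0
  have hT : f T ≤ B := ContinuousWithinAt.closure_le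
    (by rw [closure_Ico hT_ne.symm]; exact right_mem_Icc.2 hT0)
    ((hf T hT0).mono Ico_subset_Ici_self) continuousWithinAt_const hbefore
  refine (hstep T hT0 fun s hs => ?_).not_ge hTB
  rcases hs.2.lt_or_eq with h | rfl
  exacts [hbefore s ⟨hs.1, h⟩, hT]

section VariationOfConstants

variable {E : Type*} [NormedAddCommGroup E] [NormedSpace ℝ E] [CompleteSpace E]

theorem eq_exp_smul_apply_add_integral_of_hasDerivAt (L : E →L[ℝ] E) {r f : ℝ → E} {T : ℝ}
    (hT : 0 ≤ T) (hr : ∀ s ∈ Icc 0 T, HasDerivAt r (L (r s) + f s) s)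
    (hf : ContinuousOn f (Icc 0 T)) :
    r T = exp (T • L) (r 0) + ∫ s in (0 : ℝ)..T, exp ((T - s) • L) (f s) := by
  have hkernel (s : ℝ) :
      HasDerivAt (fun u : ℝ => exp ((T - u) • L)) (-(exp ((T - s) • L) * L)) s := by
    have h := (hasDerivAt_exp_smul_const L (T - s)).scomp s ((hasDerivAt_id s).const_sub T)
    simpa [Function.comp_def] using h
  have hkernel_cont : Continuous fun s : ℝ => exp ((T - s) • L) :=
    continuous_iff_continuousAt.2 fun s => (hkernel s).continuousAt
  have hftc := intervalIntegral.integral_eq_sub_of_hasDerivAt_of_le hT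
    (hkernel_cont.continuousOn.clm_apply fun s hs => (hr s hs).continuousAt.continuousWithinAt)
    (fun s hs => ((hkernel s).clm_apply (hr s (Ioo_subset_Icc_self hs))).congr_deriv (by
      simp [mul_apply_eq_comp]))
    ((hkernel_cont.continuousOn.clm_apply hf).intervalIntegrable_of_Icc hT)
  rw [hftc]
  simp

theorem exp_mul_norm_le_of_forall_exp_mul_norm_le (L : E →L[ℝ] E) {M a C K T : ℝ} (ha : 0 < a)
    (hC : 0 ≤ C) (hL : ∀ t ≥ 0, ‖exp (t • L)‖ ≤ M * rexp (-(a * t)))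
    {g : ℝ × E → E} (hg : Continuous g) (hgb : ∀ t v, ‖g (t, v)‖ ≤ C * ‖v‖ ^ 2)
    {r : ℝ → E} (hr : ∀ t ≥ 0, HasDerivAt r (L (r t) + g (t, r t)) t)
    (hT : 0 ≤ T) (hK : ∀ s ∈ Icc 0 T, rexp (a * s) * ‖r s‖ ≤ K) :
    rexp (a * T) * ‖r T‖ ≤ M * ‖r 0‖ + M * C * K ^ 2 / a := by
  have hexpL (t : ℝ) (ht : 0 ≤ t) (v : E) : ‖exp (t • L) v‖ ≤ M * rexp (-(a * t)) * ‖v‖ :=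
    (exp (t • L)).le_of_opNorm_le (hL t ht) v
  have hM (t : ℝ) (ht : 0 ≤ t) : 0 ≤ M * rexp (-(a * t)) := (norm_nonneg _).trans (hL t ht)
  set c := M * C * K ^ 2 * rexp (-(a * T))
  have hc : 0 ≤ c := by
    have := hM 0 le_rfl
    simp only [mul_zero, neg_zero, Real.exp_zero, mul_one] at this
    positivity
  have hintegrand : ∀ s ∈ Ioc 0 T, ‖exp ((T - s) • L) (g (s, r s))‖ ≤ c * rexp (-a * s) := by
    intro s ⟨hs0, hsT⟩
    have hTs : 0 ≤ T - s := sub_nonneg.2 hsT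
    have hrs : ‖r s‖ ≤ K * rexp (-(a * s)) := by
      rw [Real.exp_neg, ← div_eq_mul_inv, le_div_iff₀' (Real.exp_pos _)]
      exact hK s ⟨hs0.le, hsT⟩
    have hexp : rexp (-(a * (T - s))) * rexp (-(a * s)) ^ 2 = rexp (-(a * T)) * rexp (-a * s) := by
      rw [sq, ← Real.exp_add, ← Real.exp_add, ← Real.exp_add]; ring_nf
    calc ‖exp ((T - s) • L) (g (s, r s))‖
        ≤ M * rexp (-(a * (T - s))) * (C * ‖r s‖ ^ 2) :=
          (hexpL _ hTs _).trans (by gcongr; exacts [hM _ hTs, hgb _ _])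
      _ ≤ M * rexp (-(a * (T - s))) * (C * (K * rexp (-(a * s))) ^ 2) := by
          gcongr; exact hM _ hTs
      _ = c * rexp (-a * s) := by linear_combination (M * C * K ^ 2) * hexp
  have hintegral : ‖∫ s in (0 : ℝ)..T, exp ((T - s) • L) (g (s, r s))‖ ≤ c / a := by
    refine (norm_integral_le_of_norm_le_mul_exp (neg_ne_zero.2 ha.ne') hT hintegrand).trans ?_
    rw [div_neg, ← neg_div, neg_sub, mul_div_assoc']
    gcongr
    nlinarith [mul_nonneg hc (Real.exp_pos (-a * T)).le]
  rw [eq_exp_smul_apply_add_integral_of_hasDerivAt L hT (fun s hs => hr s hs.1)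
    (hg.comp_continuousOn (continuousOn_id.prodMk fun s hs =>
      (hr s hs.1).continuousAt.continuousWithinAt))]
  calc rexp (a * T) * ‖exp (T • L) (r 0) + ∫ s in (0 : ℝ)..T, exp ((T - s) • L) (g (s, r s))‖
      ≤ rexp (a * T) * (M * rexp (-(a * T)) * ‖r 0‖ + c / a) := by
        gcongr
        exact (norm_add_le _ _).trans (add_le_add (hexpL T hT _) hintegral)
    _ = M * ‖r 0‖ + M * C * K ^ 2 / a := by
        simp only [c, Real.exp_neg]; field_simp

end VariationOfConstants

/-- Local synchronization under a quadratic remainder bound: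
for Hurwitz `H` and continuous `g` with `‖g(t,v)‖ ≤ C‖v‖²`, solutions of
`r' = H·r + g(t,r)` with small enough initial norm tend to `0`. -/
theorem local_synchronization_quadratic_bound {n : ℕ}
    (H : Matrix (Fin n) (Fin n) ℝ)
    (hH : ∀ z : ℂ, (Polynomial.aeval z) H.charpoly = 0 → z.re < 0)
    (C : ℝ) (hC : 0 < C)
    (g : ℝ × EuclideanSpace ℝ (Fin n) → EuclideanSpace ℝ (Fin n))
    (hg : Continuous g)
    (hgb : ∀ (t : ℝ) (v : EuclideanSpace ℝ (Fin n)), ‖g (t, v)‖ ≤ C * ‖v‖ ^ 2) :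
    ∃ δ > 0, ∀ r : ℝ → EuclideanSpace ℝ (Fin n),
      (∀ t : ℝ, 0 ≤ t → HasDerivAt r (Matrix.toEuclideanLin H (r t) + g (t, r t)) t) →
      ‖r 0‖ ≤ δ →
      Filter.Tendsto (fun t => ‖r t‖) Filter.atTop (nhds 0) := by
  obtain ⟨a, ha, M, hM, hL⟩ := H.exists_norm_exp_smul_toEuclideanCLM_le hH
  -- Chosen so that `M * C * (2 * M * δ) ^ 2 / a = M * δ / 2`.
  set δ := a / (8 * M ^ 2 * C)
  have hδ : 0 < δ := by positivity
  refine ⟨δ, hδ, fun r hr hr0 => ?_⟩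
  have hbound : ∀ t ≥ 0, rexp (a * t) * ‖r t‖ < 2 * M * δ := by
    refine forall_lt_of_forall_le_imp_lt (fun t ht => ?_) ?_ fun T hT hK => ?_
    · exact ((Real.continuous_exp.comp (continuous_const.mul continuous_id)).continuousAt.mul
        (hr t ht).continuousAt.norm).continuousWithinAt
    · simp only [mul_zero, Real.exp_zero, one_mul]
      nlinarith
    · have h := exp_mul_norm_le_of_forall_exp_mul_norm_le _ ha hC.le hL hg hgb hr hT hK
      have hquad : M * C * (2 * M * δ) ^ 2 / a = M * δ / 2 := by
        simp only [δ]
        field_simp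
        ring
      nlinarith
  have hdecay : Filter.Tendsto (fun t => 2 * M * δ * rexp (-(a * t))) Filter.atTop (nhds 0) := by
    simpa using (Real.tendsto_exp_neg_atTop_nhds_zero.comp
      (Filter.tendsto_id.const_mul_atTop ha)).const_mul (2 * M * δ)
  refine squeeze_zero' (Filter.Eventually.of_forall fun t => norm_nonneg _) ?_ hdecay
  filter_upwards [Filter.eventually_ge_atTop 0] with t ht
  rw [Real.exp_neg, ← div_eq_mul_inv, le_div_iff₀' (Real.exp_pos _)]
  exact (hbound t ht).le
end

section
/- (System H.) The real 3×3 matrix H(p) with rows (0, −1, p), (1, 1/2, 0), (1, 0, −1) is Hurwitz (every complex eigenvalue has negative real part) if and only if −2 < p < −3/4. -/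
open Polynomial

private lemma ivt_cubic (p a b : ℝ) (hab : a ≤ b)
    (ha : a^3 + a^2/2 + (1/2-p)*a + (1+p/2) ≤ 0)
    (hb : 0 ≤ b^3 + b^2/2 + (1/2-p)*b + (1+p/2)) :
    ∃ r ∈ Set.Icc a b, r^3 + r^2/2 + (1/2-p)*r + (1+p/2) = 0 := by
  have hc : ContinuousOn (fun x : ℝ => x^3 + x^2/2 + (1/2-p)*x + (1+p/2)) (Set.Icc a b) := by
    fun_prop
  obtain ⟨r, hr, hr0⟩ := intermediate_value_Icc hab hc ⟨ha, hb⟩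
  exact ⟨r, hr, hr0⟩

/-- The coupling matrix !![(0 : ℝ), -1, p; 1, 1/2, 0; 1, 0, -1] is Hurwitz iff -2 < p < -3/4. -/
theorem hurwitz_system_H (p : ℝ) :
    (∀ z : ℂ, (Polynomial.aeval z) (!![(0 : ℝ), -1, p; 1, 1/2, 0; 1, 0, -1]).charpoly = 0 → z.re < 0) ↔
      -2 < p ∧ p < -3/4 := by
  have hcp : ∀ z : ℂ, (Polynomial.aeval z) (!![(0 : ℝ), -1, p; 1, 1/2, 0; 1, 0, -1]).charpoly
      = z^3 + (1/2)*z^2 + (1/2 - (p:ℂ))*z + (1 + (p:ℂ)/2) := by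
    intro z
    rw [Matrix.charpoly, Matrix.det_fin_three]
    simp [Matrix.charmatrix_apply, Matrix.one_apply, Matrix.vecHead, Matrix.vecTail]
    ring
  constructor
  · intro H
    have Hreal : ∀ r : ℝ, r^3 + r^2/2 + (1/2-p)*r + (1+p/2) = 0 → r < 0 := by
      intro r hr
      have := H (r:ℝ) (by
        rw [hcp]
        have : ((r^3 + r^2/2 + (1/2-p)*r + (1+p/2) : ℝ) : ℂ) = 0 := by rw [hr]; norm_num
        push_cast at this
        rw [← this]; ring)
      simpa using this
    constructor
    · -- p > -2
      by_contra hp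
      push_neg at hp
      obtain ⟨r, hr, hr0⟩ := ivt_cubic p 0 2 (by norm_num) (by nlinarith) (by nlinarith)
      have := Hreal r hr0
      linarith [hr.1]
    · -- p < -3/4
      by_contra hp
      push_neg at hp
      obtain ⟨M, hM⟩ : ∃ M : ℝ, M = 3 + |p| := ⟨_, rfl⟩
      have hMp : p ≤ M - 3 := by rw [hM]; cases abs_cases p with
        | inl h => linarith [h.1]
        | inr h => linarith [h.1, abs_nonneg p]
      have hM3 : 3 ≤ M := by rw [hM]; linarith [abs_nonneg p]
      obtain ⟨r, hrmem, hr0⟩ := ivt_cubic p (-M) 0 (by linarith)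
        (by nlinarith [sq_nonneg (M - 3)]) (by nlinarith)
      have hrneg : r < 0 := Hreal r hr0
      obtain ⟨β, hβd⟩ : ∃ β : ℝ, β = 1/2 + r := ⟨_, rfl⟩
      obtain ⟨γ, hγd⟩ : ∃ γ : ℝ, γ = r^2 + r/2 + 1/2 - p := ⟨_, rfl⟩
      have hrγ : r * γ = -(1+p/2) := by rw [hγd]; linear_combination hr0
      have hγ : 0 < γ := by nlinarith [hrγ]
      obtain ⟨s, hs⟩ : ∃ s : ℂ, s^2 = (β:ℂ)^2 - 4*(γ:ℂ) :=
        ⟨((β:ℂ)^2 - 4*(γ:ℂ)) ^ ((2:ℂ))⁻¹, Complex.cpow_nat_inv_pow _ (n := 2) (by norm_num)⟩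
      have hfac : ∀ z : ℂ, z^3 + (1/2)*z^2 + (1/2 - (p:ℂ))*z + (1 + (p:ℂ)/2)
          = (z - r) * (z^2 + β*z + γ) := by
        intro z
        have h0 : ((r^3 + r^2/2 + (1/2-p)*r + (1+p/2) : ℝ) : ℂ) = 0 := by rw [hr0]; norm_num
        rw [hβd, hγd]
        push_cast at h0 ⊢
        linear_combination h0
      have hroot : ∀ z : ℂ, z^2 + (β:ℂ)*z + (γ:ℂ) = 0 → z.re < 0 := by
        intro z hz
        apply H
        rw [hcp, hfac, hz, mul_zero]
      have hz1 : ((-(β:ℂ) + s)/2).re < 0 := by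
        apply hroot
        linear_combination hs/4
      have hz2 : ((-(β:ℂ) - s)/2).re < 0 := by
        apply hroot
        linear_combination hs/4
      have hβpos : 0 < β := by
        simp [Complex.div_re] at hz1 hz2
        linarith
      -- ab - c = (1/2+r)*(γ - r/2) = -3/4 - p > 0 contradicts p ≥ -3/4
      have key : -3/4 - p = β * (γ - r/2) := by
        rw [hβd, hγd]; linear_combination -hr0
      nlinarith [mul_pos hβpos (show 0 < γ - r/2 by linarith)]
  · rintro ⟨h1, h2⟩ z hz
    rw [hcp] at hz
    by_contra hx
    push_neg at hx
    have h1' := congrArg Complex.re hz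
    have h2' := congrArg Complex.im hz
    simp [pow_succ, Complex.add_re, Complex.add_im, Complex.mul_re, Complex.mul_im,
      Complex.ofReal_re, Complex.ofReal_im] at h1' h2'
    obtain ⟨x, y⟩ := z
    simp only [Complex.re, Complex.im] at *
    rcases eq_or_ne y 0 with hy | hy
    · rw [hy] at h1'
      nlinarith [pow_nonneg hx 3, sq_nonneg x]
    · have h3 : 3*x^2 - y^2 + x + 1/2 - p = 0 := by
        have := mul_eq_zero.mp (show y * (3*x^2 - y^2 + x + 1/2 - p) = 0 by nlinarith [h2'])
        tauto
      nlinarith [pow_nonneg hx 3, sq_nonneg x, sq_nonneg y, mul_nonneg hx (sq_nonneg y), h1', h3]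
end

section
/- (System L.) The real 3×3 matrix H(p) with rows (0, 1, 39/10), (p, −1, 0), (−1, 0, 0) is Hurwitz (every complex eigenvalue has negative real part) if and only if p < 0. -/
open Polynomial Matrix

/-- The coupling matrix !![(0 : ℝ), 1, 39/10; p, -1, 0; -1, 0, 0] is Hurwitz iff p < 0. -/
theorem hurwitz_system_L (p : ℝ) :
    (∀ z : ℂ, (Polynomial.aeval z) (!![(0 : ℝ), 1, 39/10; p, -1, 0; -1, 0, 0]).charpoly = 0 → z.re < 0) ↔
      p < 0 := by
  have key : ∀ z : ℂ, (Polynomial.aeval z) (!![(0 : ℝ), 1, 39/10; p, -1, 0; -1, 0, 0]).charpoly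
      = z^3 + z^2 + ((39:ℂ)/10 - p)*z + 39/10 := by
    intro z
    rw [Matrix.charpoly, Matrix.det_fin_three]
    simp [charmatrix_apply, Matrix.diagonal, Matrix.one_apply, Matrix.vecHead, Matrix.vecTail]
    ring
  constructor
  · -- Hurwitz → p < 0
    intro h
    by_contra hp
    push_neg at hp  -- 0 ≤ p
    obtain ⟨b, hb⟩ : ∃ b : ℝ, b = 39/10 - p := ⟨_, rfl⟩
    have hbC : (b:ℂ) = 39/10 - (p:ℂ) := by rw [hb]; push_cast; ring
    obtain ⟨M, hM⟩ : ∃ M : ℝ, M = |b| + 39/10 + 2 := ⟨_, rfl⟩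
    have habs := abs_nonneg b
    have hle := le_abs_self b
    have hle' := neg_abs_le b
    have hM2 : (2:ℝ) ≤ M := by rw [hM]; linarith
    have e1 : 2*M^2 ≤ M^3 := by nlinarith [sq_nonneg M]
    have e2 : M^2 = |b| * M + (39/10+2)*M := by rw [hM]; ring
    have e3 := mul_le_mul_of_nonneg_right hle' (by linarith : (0:ℝ) ≤ M)
    -- real root r ≤ -1
    have hcont : ContinuousOn (fun x : ℝ => x^3 + x^2 + b*x + 39/10) (Set.Icc (-M) (-1)) := by
      fun_prop
    have hivt := intermediate_value_Icc (by linarith : (-M:ℝ) ≤ -1) hcont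
    have hmem : (0:ℝ) ∈ Set.Icc ((fun x : ℝ => x^3 + x^2 + b*x + 39/10) (-M))
        ((fun x : ℝ => x^3 + x^2 + b*x + 39/10) (-1)) := by
      constructor
      · show (-M)^3 + (-M)^2 + b*(-M) + 39/10 ≤ 0
        nlinarith [e1, e2, e3, hM2]
      · show (0:ℝ) ≤ (-1)^3 + (-1)^2 + b*(-1) + 39/10
        rw [hb]; linarith
    obtain ⟨r, hrmem, hfr⟩ := hivt hmem
    have hr1 : r ≤ -1 := hrmem.2
    have hfr' : r^3 + r^2 + b*r + 39/10 = 0 := hfr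
    have hfrC : (r:ℂ)^3 + (r:ℂ)^2 + (b:ℂ)*(r:ℂ) + 39/10 = 0 := by
      have := congrArg (fun t : ℝ => (t:ℂ)) hfr'
      push_cast at this
      linear_combination this
    have hCpos : 0 < r^2 + r + b := by
      by_contra hc
      push_neg at hc
      nlinarith [hfr', mul_nonneg (by linarith : (0:ℝ) ≤ -r) (by linarith : (0:ℝ) ≤ -(r^2+r+b))]
    rcases le_or_gt (4*(r^2+r+b)) ((1+r)^2) with hD | hD
    · -- quadratic has real roots; the larger one is ≥ 0
      set s : ℝ := Real.sqrt ((1+r)^2 - 4*(r^2+r+b)) with hsdef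
      have hs2 : s^2 = (1+r)^2 - 4*(r^2+r+b) := Real.sq_sqrt (by linarith)
      have hsnn : 0 ≤ s := Real.sqrt_nonneg _
      obtain ⟨x, hx⟩ : ∃ x : ℝ, x = (-(1+r) + s)/2 := ⟨_, rfl⟩
      have hxnn : 0 ≤ x := by rw [hx]; linarith [hsnn]
      have hq : x^2 + (1+r)*x + (r^2+r+b) = 0 := by
        rw [hx]; linear_combination hs2/4
      have hcube : x^3 + x^2 + b*x + 39/10 = 0 := by
        linear_combination (x - r)*hq + hfr'
      have h0 : ((x:ℂ))^3 + (x:ℂ)^2 + ((39:ℂ)/10 - p)*(x:ℂ) + 39/10 = 0 := by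
        have := congrArg (fun t : ℝ => (t:ℂ)) hcube
        push_cast at this
        rw [← hbC]
        linear_combination this
      have hlt := h (x:ℂ) (by rw [key]; exact h0)
      simp at hlt
      linarith
    · -- complex pair with real part -(1+r)/2 ≥ 0
      set s : ℝ := Real.sqrt (4*(r^2+r+b) - (1+r)^2) with hsdef
      have hs2 : s^2 = 4*(r^2+r+b) - (1+r)^2 := Real.sq_sqrt (by linarith)
      obtain ⟨z, hzdef⟩ : ∃ z : ℂ, z = (↑(-(1+r)/2) : ℂ) + Complex.I * (↑(s/2) : ℂ) := ⟨_, rfl⟩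
      have hs2C : (s:ℂ)^2 = 4*((r:ℂ)^2+(r:ℂ)+(b:ℂ)) - (1+(r:ℂ))^2 := by
        have := congrArg (fun t : ℝ => (t:ℂ)) hs2
        push_cast at this
        linear_combination this
      have hq : z^2 + (1+(r:ℂ))*z + ((r:ℂ)^2+(r:ℂ)+(b:ℂ)) = 0 := by
        rw [hzdef]
        push_cast
        linear_combination ((s:ℂ)^2/4) * Complex.I_sq - hs2C/4
      have hcube : z^3 + z^2 + (b:ℂ)*z + 39/10 = 0 := by
        linear_combination (z - (r:ℂ))*hq + hfrC
      have h0 : z^3 + z^2 + ((39:ℂ)/10 - p)*z + 39/10 = 0 := by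
        rw [← hbC]; exact hcube
      have hlt := h z (by rw [key]; exact h0)
      have hre : z.re = -(1+r)/2 := by rw [hzdef]; simp
      rw [hre] at hlt
      linarith
  · -- p < 0 → Hurwitz
    intro hp z hz
    rw [key] at hz
    by_contra hx
    push_neg at hx  -- 0 ≤ z.re
    rw [← Complex.re_add_im z] at hz
    set x : ℝ := z.re with hxd
    set y : ℝ := z.im with hyd
    have h1 := congrArg Complex.re hz
    have h2 := congrArg Complex.im hz
    simp [Complex.add_re, Complex.add_im, Complex.mul_re, Complex.mul_im, pow_succ] at h1 h2
    have h2' : y * (3*x^2 - y^2 + 2*x + (39/10 - p)) = 0 := by linear_combination h2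
    rcases mul_eq_zero.mp h2' with hy | hy
    · rw [hy] at h1
      nlinarith [h1, hx, hp, pow_nonneg hx 3, sq_nonneg x]
    · nlinarith [h1, hy, hx, hp, sq_nonneg x, sq_nonneg y, mul_nonneg hx (sq_nonneg x), mul_nonneg hx hx]
end

section
/- (System M.) The real 3×3 matrix H(p) with rows (0, 0, −1), (p, −1, 0), (17/10, 1, 0) is Hurwitz (every complex eigenvalue has negative real part) if and only if −17/10 < p < 0. -/
open Polynomial Matrix

private lemma charpoly_M (p : ℝ) : (!![(0 : ℝ), 0, -1; p, -1, 0; 17/10, 1, 0]).charpoly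
    = X^3 + X^2 + C (17/10 : ℝ) * X + C (p + 17/10) := by
  rw [Matrix.charpoly, Matrix.det_fin_three]
  simp [Matrix.charmatrix_apply, Matrix.diagonal, Matrix.vecHead, Matrix.vecTail]
  ring

private lemma root_iff (p : ℝ) (z : ℂ) :
    (Polynomial.aeval z) (!![(0 : ℝ), 0, -1; p, -1, 0; 17/10, 1, 0]).charpoly = 0 ↔
      z^3 + z^2 + (17/10 : ℂ) * z + ((p : ℂ) + 17/10) = 0 := by
  rw [charpoly_M]
  simp only [map_add, _root_.map_mul, map_pow, aeval_X, aeval_C,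
    Complex.coe_algebraMap]
  push_cast
  ring_nf

private lemma real_root_neg (p : ℝ) (h : ∀ z : ℂ, z^3 + z^2 + (17/10 : ℂ) * z + ((p : ℂ) + 17/10) = 0 → z.re < 0)
    (x : ℝ) (hx : x^3 + x^2 + 17/10 * x + (p + 17/10) = 0) : x < 0 := by
  have hxz : (x:ℂ)^3 + (x:ℂ)^2 + (17/10:ℂ)*(x:ℂ) + ((p:ℂ) + 17/10) = 0 := by
    have h2 := congrArg Complex.ofReal hx
    push_cast at h2
    linear_combination h2
  simpa using h x hxz

/-- The coupling matrix !![(0 : ℝ), 0, -1; p, -1, 0; 17/10, 1, 0] is Hurwitz iff -17/10 < p < 0. -/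
theorem hurwitz_system_M (p : ℝ) :
    (∀ z : ℂ, (Polynomial.aeval z) (!![(0 : ℝ), 0, -1; p, -1, 0; 17/10, 1, 0]).charpoly = 0 → z.re < 0) ↔
      -17/10 < p ∧ p < 0 := by
  simp only [root_iff]
  constructor
  · intro h
    have hroot := real_root_neg p h
    constructor
    · -- p > -17/10 : otherwise a nonnegative real root exists
      by_contra hp
      push_neg at hp
      have hc : ContinuousOn (fun x : ℝ => x^3 + x^2 + 17/10 * x + (p + 17/10)) (Set.Icc 0 (-p)) := by
        fun_prop
      have h0 : (0:ℝ)^3 + (0:ℝ)^2 + 17/10 * 0 + (p + 17/10) ≤ 0 := by norm_num; linarith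
      have h1 : (0:ℝ) ≤ (-p)^3 + (-p)^2 + 17/10 * (-p) + (p + 17/10) := by
        nlinarith [sq_nonneg p, sq_nonneg (p+1)]
      obtain ⟨x, hx1, hx2⟩ := intermediate_value_Icc (by linarith : (0:ℝ) ≤ -p) hc ⟨h0, h1⟩
      exact absurd (hroot x hx2) (by linarith [hx1.1])
    · -- p < 0
      by_contra hp
      push_neg at hp
      -- get the real root r
      have hc : ContinuousOn (fun x : ℝ => x^3 + x^2 + 17/10 * x + (p + 17/10))
          (Set.Icc (-(2+p)) 0) := by fun_prop
      have h0 : (-(2+p))^3 + (-(2+p))^2 + 17/10 * (-(2+p)) + (p + 17/10) ≤ 0 := by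
        nlinarith [sq_nonneg p, mul_nonneg hp (mul_nonneg hp hp)]
      have h1 : (0:ℝ) ≤ (0:ℝ)^3 + (0:ℝ)^2 + 17/10 * 0 + (p + 17/10) := by norm_num; linarith
      obtain ⟨r, hr1, hfr⟩ := intermediate_value_Icc (by linarith : -(2+p) ≤ (0:ℝ)) hc ⟨h0, h1⟩
      simp only at hfr
      -- r ≤ -1
      have hrle : r ≤ -1 := by nlinarith [sq_nonneg r]
      -- discriminant of the quadratic factor is negative
      have hdpos : (0:ℝ) < 3*r^2 + 2*r + 29/5 := by nlinarith [sq_nonneg (3*r+1)]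
      have hsq : Real.sqrt (3*r^2 + 2*r + 29/5) ^ 2 = 3*r^2 + 2*r + 29/5 :=
        Real.sq_sqrt hdpos.le
      set s : ℝ := Real.sqrt (3*r^2 + 2*r + 29/5) with hs
      set w : ℂ := ⟨-(1+r)/2, s / 2⟩ with hw
      have hw2 : w^2 + ((1+r : ℝ) : ℂ) * w + ((r^2 + r + 17/10 : ℝ) : ℂ) = 0 := by
        apply Complex.ext
        · simp only [hw, pow_two, Complex.mul_re, Complex.add_re, Complex.ofReal_re,
            Complex.ofReal_im, Complex.zero_re]
          ring_nf
          linear_combination (-1/4 : ℝ) * hsq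
        · simp only [hw, pow_two, Complex.mul_im, Complex.add_im, Complex.ofReal_re,
            Complex.ofReal_im, Complex.zero_im]
          ring
      have hwroot : w^3 + w^2 + (17/10 : ℂ) * w + ((p : ℂ) + 17/10) = 0 := by
        have key : w^3 + w^2 + (17/10 : ℂ) * w + ((p : ℂ) + 17/10)
            = (w - (r:ℂ)) * (w^2 + ((1+r : ℝ) : ℂ) * w + ((r^2 + r + 17/10 : ℝ) : ℂ))
              + ((r^3 + r^2 + 17/10 * r + (p + 17/10) : ℝ) : ℂ) := by
          push_cast; ring
        rw [key, hw2, hfr]; simp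
      have hre := h w hwroot
      have : -(1+r)/2 < 0 := hre
      linarith
  · rintro ⟨hp1, hp2⟩ z hz
    obtain ⟨x, y⟩ := z
    have hre := congrArg Complex.re hz
    have him := congrArg Complex.im hz
    simp only [pow_succ, pow_zero, one_mul, Complex.mul_re, Complex.mul_im,
      Complex.add_re, Complex.add_im, Complex.ofReal_re, Complex.ofReal_im,
      Complex.zero_re, Complex.zero_im] at hre him
    have hre' : x^3 - 3*x*y^2 + x^2 - y^2 + 17/10*x + p + 17/10 = 0 := by
      have : ((17:ℂ)/10).re = 17/10 := by norm_num
      norm_num at hre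
      nlinarith [hre]
    have him' : 3*x^2*y - y^3 + 2*x*y + 17/10*y = 0 := by
      norm_num at him
      nlinarith [him]
    show x < 0
    rcases eq_or_ne y 0 with hy | hy
    · subst hy
      norm_num at hre'
      nlinarith [sq_nonneg x]
    · have hy2 : y^2 = 3*x^2 + 2*x + 17/10 := by
        have hfac : y * (3*x^2 - y^2 + 2*x + 17/10) = 0 := by linarith [him']
        rcases mul_eq_zero.mp hfac with h' | h'
        · exact absurd h' hy
        · linarith
      nlinarith [hre', hy2, sq_nonneg x, sq_nonneg (x+1)]
end
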